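/- arXiv:1311.0932 — 2 statements merged into one kernel-verified Lean document; each statement's English description precedes it below -/
import Mathlib

section
/- Polynomial consistency of the VEM bilinear form: for every linear displacement field p(x) = a + Bx and every v in W, a_h^E(p, v) = a^E(p, v), where a_h^E(u,w) = a^E(π_C u, π_C w) + s^E(u - π_P u, w - π_P w) for any symmetric bilinear form s^E. -/
open MeasureTheory Matrix

/-- The gradient matrix (∇v)_{ij} = ∂v_i/∂x_j of a vector field on ℝ³. -/
noncomputable def grad (v : (Fin 3 → ℝ) → (Fin 3 → ℝ)) (x : Fin 3 → ℝ) :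
    Matrix (Fin 3) (Fin 3) ℝ :=
  Matrix.of fun i j => fderiv ℝ v x (Pi.single j 1) i

/-- Symmetric gradient ε(v) = (∇v + ∇vᵀ)/2. -/
noncomputable def symGrad (v : (Fin 3 → ℝ) → (Fin 3 → ℝ)) (x : Fin 3 → ℝ) :
    Matrix (Fin 3) (Fin 3) ℝ :=
  (1/2 : ℝ) • (grad v x + (grad v x)ᵀ)

/-- Skew-symmetric gradient ω(v) = (∇v - ∇vᵀ)/2. -/
noncomputable def skewGrad (v : (Fin 3 → ℝ) → (Fin 3 → ℝ)) (x : Fin 3 → ℝ) :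
    Matrix (Fin 3) (Fin 3) ℝ :=
  (1/2 : ℝ) • (grad v x - (grad v x)ᵀ)

/-- Volume average over E of a matrix-valued field, entrywise. -/
noncomputable def avgMat (E : Set (Fin 3 → ℝ))
    (M : (Fin 3 → ℝ) → Matrix (Fin 3) (Fin 3) ℝ) : Matrix (Fin 3) (Fin 3) ℝ :=
  Matrix.of fun i j => (volume E).toReal⁻¹ * ∫ x in E, M x i j

/-- Nodal (vertex) average v̄ = (1/n) ∑ v(xᵢ). -/
noncomputable def nodalAvg {n : ℕ} (xs : Fin n → Fin 3 → ℝ)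
    (v : (Fin 3 → ℝ) → (Fin 3 → ℝ)) : Fin 3 → ℝ :=
  (n : ℝ)⁻¹ • ∑ i, v (xs i)

/-- Vertex centroid xb = (1/n) ∑ xᵢ. -/
noncomputable def vertAvg {n : ℕ} (xs : Fin n → Fin 3 → ℝ) : Fin 3 → ℝ :=
  (n : ℝ)⁻¹ • ∑ i, xs i

/-- Rigid-body projection π_R v = v̄ + ⟨ω(v)⟩ (x - xb). -/
noncomputable def piR {n : ℕ} (E : Set (Fin 3 → ℝ)) (xs : Fin n → Fin 3 → ℝ)
    (v : (Fin 3 → ℝ) → (Fin 3 → ℝ)) : (Fin 3 → ℝ) → (Fin 3 → ℝ) :=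
  fun y => nodalAvg xs v + (avgMat E (skewGrad v)).mulVec (y - vertAvg xs)

/-- Constant-strain projection π_C v = ⟨ε(v)⟩ (x - xb). -/
noncomputable def piC {n : ℕ} (E : Set (Fin 3 → ℝ)) (xs : Fin n → Fin 3 → ℝ)
    (v : (Fin 3 → ℝ) → (Fin 3 → ℝ)) : (Fin 3 → ℝ) → (Fin 3 → ℝ) :=
  fun y => (avgMat E (symGrad v)).mulVec (y - vertAvg xs)

/-- Stress σ(u) = C ε(u) for a fourth-order elasticity tensor C. -/
noncomputable def stress (C : Fin 3 → Fin 3 → Fin 3 → Fin 3 → ℝ)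
    (u : (Fin 3 → ℝ) → (Fin 3 → ℝ)) (x : Fin 3 → ℝ) : Matrix (Fin 3) (Fin 3) ℝ :=
  Matrix.of fun i j => ∑ k, ∑ l, C i j k l * symGrad u x k l

/-- Local energy bilinear form a^E(u,w) = ∫_E σ(u) : ε(w) dx. -/
noncomputable def aE (C : Fin 3 → Fin 3 → Fin 3 → Fin 3 → ℝ) (E : Set (Fin 3 → ℝ))
    (u w : (Fin 3 → ℝ) → (Fin 3 → ℝ)) : ℝ :=
  ∫ x in E, ∑ i, ∑ j, stress C u x i j * symGrad w x i j

lemma hasFDerivAt_mulVec (B : Matrix (Fin 3) (Fin 3) ℝ) (x : Fin 3 → ℝ) :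
    HasFDerivAt (fun y => B.mulVec y) (B.mulVecLin.toContinuousLinearMap) x :=
  B.mulVecLin.toContinuousLinearMap.hasFDerivAt

lemma grad_affine (a : Fin 3 → ℝ) (B : Matrix (Fin 3) (Fin 3) ℝ) (x : Fin 3 → ℝ) :
    grad (fun y => a + B.mulVec y) x = B := by
  have h := (hasFDerivAt_mulVec B x).const_add a
  ext i j
  simp [grad, h.fderiv, Matrix.mulVec_single]

lemma grad_linsub (M : Matrix (Fin 3) (Fin 3) ℝ) (c x : Fin 3 → ℝ) :
    grad (fun y => M.mulVec (y - c)) x = M := by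
  have h : HasFDerivAt (fun y => M.mulVec (y - c)) M.mulVecLin.toContinuousLinearMap x := by
    simpa [Matrix.mulVec_sub] using (hasFDerivAt_mulVec M x).sub_const (M.mulVec c)
  ext i j
  simp [grad, h.fderiv, Matrix.mulVec_single]

lemma avgMat_const (E : Set (Fin 3 → ℝ)) (hpos : volume E ≠ 0) (hfin : volume E ≠ ⊤)
    (c : Matrix (Fin 3) (Fin 3) ℝ) : avgMat E (fun _ => c) = c := by
  have h0 : (volume E).toReal ≠ 0 := ENNReal.toReal_ne_zero.mpr ⟨hpos, hfin⟩
  ext i j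
  simp only [avgMat, Matrix.of_apply, MeasureTheory.setIntegral_const, smul_eq_mul,
    MeasureTheory.measureReal_def]
  field_simp

lemma symGrad_symm (w : (Fin 3 → ℝ) → (Fin 3 → ℝ)) (x : Fin 3 → ℝ) (i j : Fin 3) :
    symGrad w x j i = symGrad w x i j := by
  simp only [symGrad, Matrix.smul_apply, Matrix.add_apply, Matrix.transpose_apply,
    smul_eq_mul]
  ring

/-- polynomial consistency of the VEM bilinear form:
a_h^E(p,v) = a^E(π_C p, π_C v) + s^E(p - π_P p, v - π_P v) equals a^E(p,v)
for every affine field p and every v, for an arbitrary symmetric bilinear s^E. -/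
theorem stmt10 {n : ℕ} (hn : 0 < n) (E : Set (Fin 3 → ℝ)) (hE : MeasurableSet E)
    (hpos : volume E ≠ 0) (hfin : volume E ≠ ⊤)
    (xs : Fin n → Fin 3 → ℝ)
    (C : Fin 3 → Fin 3 → Fin 3 → Fin 3 → ℝ)
    (hmaj : ∀ i j k l, C i j k l = C k l i j)
    (hmin1 : ∀ i j k l, C i j k l = C j i k l)
    (hmin2 : ∀ i j k l, C i j k l = C i j l k)
    (s : ((Fin 3 → ℝ) → (Fin 3 → ℝ)) →ₗ[ℝ] ((Fin 3 → ℝ) → (Fin 3 → ℝ)) →ₗ[ℝ] ℝ)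
    (hs : ∀ u w, s u w = s w u)
    (a : Fin 3 → ℝ) (B : Matrix (Fin 3) (Fin 3) ℝ)
    (p : (Fin 3 → ℝ) → (Fin 3 → ℝ)) (hp : ∀ y, p y = a + B.mulVec y)
    (v : (Fin 3 → ℝ) → (Fin 3 → ℝ)) (hv : ContDiff ℝ (⊤ : ℕ∞) v)
    (hint : ∀ i j, IntegrableOn (fun x => symGrad v x i j) E volume) :
    aE C E (piC E xs p) (piC E xs v)
      + s (p - (piR E xs p + piC E xs p)) (v - (piR E xs v + piC E xs v))
      = aE C E p v := by
  have hpf : p = fun y => a + B.mulVec y := funext hp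
  subst hpf
  have h0 : (volume E).toReal ≠ 0 := ENNReal.toReal_ne_zero.mpr ⟨hpos, hfin⟩
  set xb := vertAvg xs with hxb
  set Bs : Matrix (Fin 3) (Fin 3) ℝ := (1/2 : ℝ) • (B + Bᵀ) with hBs
  set Bk : Matrix (Fin 3) (Fin 3) ℝ := (1/2 : ℝ) • (B - Bᵀ) with hBk
  have hBsT : Bsᵀ = Bs := by
    ext i j
    simp only [hBs, Matrix.transpose_apply, Matrix.smul_apply, Matrix.add_apply,
      smul_eq_mul]
    ring
  have hsp : symGrad (fun y => a + B.mulVec y) = fun _ => Bs := by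
    funext x; simp [symGrad, grad_affine, hBs]
  have hkp : skewGrad (fun y => a + B.mulVec y) = fun _ => Bk := by
    funext x; simp [skewGrad, grad_affine, hBk]
  have havgp : avgMat E (symGrad (fun y => a + B.mulVec y)) = Bs := by
    rw [hsp]; exact avgMat_const E hpos hfin Bs
  have havgk : avgMat E (skewGrad (fun y => a + B.mulVec y)) = Bk := by
    rw [hkp]; exact avgMat_const E hpos hfin Bk
  set M : Matrix (Fin 3) (Fin 3) ℝ := avgMat E (symGrad v) with hM
  have hMT : Mᵀ = M := by
    ext i j
    simp only [Matrix.transpose_apply, hM, avgMat, Matrix.of_apply]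
    congr 1
    exact MeasureTheory.integral_congr_ae (Filter.Eventually.of_forall
      fun x => symGrad_symm v x i j)
  have hpiCp : piC E xs (fun y => a + B.mulVec y) = fun y => Bs.mulVec (y - xb) := by
    funext y; simp [piC, havgp, hxb]
  have hpiCv : piC E xs v = fun y => M.mulVec (y - xb) := rfl
  have hspC : symGrad (piC E xs (fun y => a + B.mulVec y)) = fun _ => Bs := by
    rw [hpiCp]; funext x
    ext i j
    simp only [symGrad, grad_linsub, Matrix.smul_apply, Matrix.add_apply,
      Matrix.transpose_apply, smul_eq_mul]
    rw [show Bs j i = Bsᵀ i j from rfl, hBsT]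
    ring
  have hsvC : symGrad (piC E xs v) = fun _ => M := by
    rw [hpiCv]; funext x
    ext i j
    simp only [symGrad, grad_linsub, Matrix.smul_apply, Matrix.add_apply,
      Matrix.transpose_apply, smul_eq_mul]
    rw [show M j i = Mᵀ i j from rfl, hMT]
    ring
  set σm : Matrix (Fin 3) (Fin 3) ℝ :=
    Matrix.of fun i j => ∑ k, ∑ l, C i j k l * Bs k l with hσ
  have hstressp : stress C (fun y => a + B.mulVec y) = fun _ => σm := by
    funext x; ext i j; simp [stress, hsp, hσ]
  have hstresspC : stress C (piC E xs (fun y => a + B.mulVec y)) = fun _ => σm := by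
    funext x; ext i j; simp [stress, hspC, hσ]
  have h1 : aE C E (piC E xs (fun y => a + B.mulVec y)) (piC E xs v)
      = (volume E).toReal * ∑ i, ∑ j, σm i j * M i j := by
    unfold aE
    simp only [hstresspC, hsvC]
    rw [MeasureTheory.setIntegral_const, smul_eq_mul, MeasureTheory.measureReal_def]
  have hintval : ∀ i j, ∫ x in E, symGrad v x i j = (volume E).toReal * M i j := by
    intro i j
    simp only [hM, avgMat, Matrix.of_apply]
    field_simp
  have h2 : aE C E (fun y => a + B.mulVec y) v
      = ∑ i, ∑ j, σm i j * ((volume E).toReal * M i j) := by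
    unfold aE
    simp only [hstressp]
    rw [show (∫ x in E, ∑ i, ∑ j, σm i j * symGrad v x i j)
        = ∑ i, ∫ x in E, ∑ j, σm i j * symGrad v x i j from
      MeasureTheory.integral_finset_sum _ (fun i _ =>
      MeasureTheory.integrable_finset_sum _ (fun j _ => (hint i j).const_mul _))]
    refine Finset.sum_congr rfl fun i _ => ?_
    rw [show (∫ x in E, ∑ j, σm i j * symGrad v x i j)
        = ∑ j, ∫ x in E, σm i j * symGrad v x i j from
      MeasureTheory.integral_finset_sum _ (fun j _ => (hint i j).const_mul _)]
    refine Finset.sum_congr rfl fun j _ => ?_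
    rw [MeasureTheory.integral_const_mul, hintval]
  have hnod : nodalAvg xs (fun y => a + B.mulVec y) = a + B.mulVec xb := by
    unfold nodalAvg
    rw [Finset.sum_add_distrib, Finset.sum_const, Finset.card_univ, Fintype.card_fin]
    have hsum : ∑ i : Fin n, B.mulVec (xs i) = B.mulVec (∑ i, xs i) :=
      (map_sum B.mulVecLin xs Finset.univ).symm
    rw [hsum, smul_add, hxb]
    unfold vertAvg
    rw [Matrix.mulVec_smul]
    congr 1
    rw [← Nat.cast_smul_eq_nsmul ℝ, smul_smul, inv_mul_cancel₀
      (Nat.cast_ne_zero.mpr hn.ne'), one_smul]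
  have hBkBs : Bk + Bs = B := by
    ext i j
    simp only [hBk, hBs, Matrix.add_apply, Matrix.smul_apply, Matrix.sub_apply,
      Matrix.transpose_apply, smul_eq_mul]
    ring
  have hz : (fun y => a + B.mulVec y) - (piR E xs (fun y => a + B.mulVec y)
      + piC E xs (fun y => a + B.mulVec y)) = 0 := by
    funext y
    simp only [Pi.sub_apply, Pi.add_apply, Pi.zero_apply, piR, hpiCp, havgk, hnod, ← hxb]
    have : Bk.mulVec (y - xb) + Bs.mulVec (y - xb) = B.mulVec (y - xb) := by
      rw [← Matrix.add_mulVec, hBkBs]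
    rw [add_assoc, this, Matrix.mulVec_sub]
    abel
  rw [hz, map_zero, LinearMap.zero_apply, add_zero, h1, h2, Finset.mul_sum]
  refine Finset.sum_congr rfl fun i _ => ?_
  rw [Finset.mul_sum]
  refine Finset.sum_congr rfl fun j _ => ?_
  ring
end

section
/- For the diagonal stabilization s^E(u,v) = α^E ∑ᵢ u(xᵢ)·v(xᵢ) with α^E > 0, the VEM stiffness matrix K_h^E = |E| W_C D W_Cᵀ + α^E (I - P_P)ᵀ(I - P_P) is symmetric positive semidefinite, and its kernel equals the column space of N_R (the nodal representations of rigid body motions), provided D is positive definite and P_P = N_R W_Rᵀ + N_C W_Cᵀ is a projection onto the column space of [N_R, N_C] with W_CᵀN_R = 0, W_CᵀN_C = I. -/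
open Matrix

/-!
Both summands of `K` are positive semidefinite, so `K x = 0` forces both to annihilate `x`.
Positive definiteness of `D` turns the first condition into `W_Cᵀ x = 0`, and the second says
`x = P_P x = N_R W_Rᵀ x + N_C W_Cᵀ x`, hence `x = N_R (W_Rᵀ x)`. Conversely `W_Cᵀ N_R = 0` and
`W_Rᵀ N_R = 1` make `N_R y` a fixed point of `P_P` in the kernel of `W_Cᵀ`.
-/

namespace Matrix

section Kernel

open scoped ComplexOrder

variable {𝕜 m n : Type*} [RCLike 𝕜] [Fintype m] [Fintype n]

theorem PosSemidef.add_mulVec_eq_zero_iff {A B : Matrix n n 𝕜} (hA : A.PosSemidef)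
    (hB : B.PosSemidef) (x : n → 𝕜) :
    (A + B) *ᵥ x = 0 ↔ A *ᵥ x = 0 ∧ B *ᵥ x = 0 := by
  refine ⟨fun h => ?_, fun ⟨hAx, hBx⟩ => by rw [add_mulVec, hAx, hBx, add_zero]⟩
  have hsum : star x ⬝ᵥ A *ᵥ x + star x ⬝ᵥ B *ᵥ x = 0 := by
    rw [← dotProduct_add, ← add_mulVec, h, dotProduct_zero]
  obtain ⟨hAq, hBq⟩ := (add_eq_zero_iff_of_nonneg (hA.dotProduct_mulVec_nonneg x)
    (hB.dotProduct_mulVec_nonneg x)).mp hsum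
  exact ⟨(hA.dotProduct_mulVec_zero_iff x).mp hAq, (hB.dotProduct_mulVec_zero_iff x).mp hBq⟩

theorem PosDef.mul_mul_conjTranspose_mulVec_eq_zero_iff {D : Matrix n n 𝕜} (hD : D.PosDef)
    (B : Matrix m n 𝕜) (x : m → 𝕜) :
    (B * D * Bᴴ) *ᵥ x = 0 ↔ Bᴴ *ᵥ x = 0 := by
  refine ⟨fun h => ?_, fun h => by rw [← mulVec_mulVec, h, mulVec_zero]⟩
  have hq : star (Bᴴ *ᵥ x) ⬝ᵥ D *ᵥ (Bᴴ *ᵥ x) = 0 := by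
    rw [star_mulVec, conjTranspose_conjTranspose, ← dotProduct_mulVec, mulVec_mulVec,
      mulVec_mulVec, h, dotProduct_zero]
  by_contra hne
  exact (hD.dotProduct_mulVec_pos hne).ne' hq

end Kernel

theorem mulVec_eq_zero_and_one_sub_mulVec_eq_zero_iff {R m k l : Type*} [CommRing R]
    [Fintype m] [Fintype k] [Fintype l] [DecidableEq m] [DecidableEq k]
    (NR : Matrix m k R) (NC : Matrix m l R) (VR : Matrix k m R) (VC : Matrix l m R)
    (hVRNR : VR * NR = 1) (hVCNR : VC * NR = 0) (x : m → R) :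
    VC *ᵥ x = 0 ∧ (1 - (NR * VR + NC * VC)) *ᵥ x = 0 ↔ ∃ y, x = NR *ᵥ y := by
  constructor
  · rintro ⟨hVCx, hfix⟩
    refine ⟨VR *ᵥ x, ?_⟩
    rw [sub_mulVec, one_mulVec, sub_eq_zero, add_mulVec, ← mulVec_mulVec, ← mulVec_mulVec,
      hVCx, mulVec_zero, add_zero] at hfix
    exact hfix
  · rintro ⟨y, rfl⟩
    refine ⟨by rw [mulVec_mulVec, hVCNR, zero_mulVec], ?_⟩
    rw [mulVec_mulVec, Matrix.sub_mul, Matrix.add_mul, Matrix.mul_assoc, hVRNR,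
      Matrix.mul_assoc, hVCNR, Matrix.mul_one, Matrix.mul_zero, add_zero, Matrix.one_mul,
      sub_self, zero_mulVec]

end Matrix

theorem stmt16_general {n : ℕ}
    (NR NC WR WC : Matrix (Fin (3 * n)) (Fin 6) ℝ)
    (D : Matrix (Fin 6) (Fin 6) ℝ) (hD : D.PosDef)
    (volE αE : ℝ) (hvol : 0 < volE) (hα : 0 < αE)
    (hWRNR : WRᵀ * NR = 1)
    (hWCNR : WCᵀ * NR = 0)
    (K : Matrix (Fin (3 * n)) (Fin (3 * n)) ℝ)
    (hK : K = volE • (WC * D * WCᵀ) +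
      αE • ((1 - (NR * WRᵀ + NC * WCᵀ))ᵀ * (1 - (NR * WRᵀ + NC * WCᵀ)))) :
    K.PosSemidef ∧ ∀ x : Fin (3 * n) → ℝ,
      (K.mulVec x = 0 ↔ ∃ y : Fin 6 → ℝ, x = NR.mulVec y) := by
  set Q := 1 - (NR * WRᵀ + NC * WCᵀ)
  have hC : (volE • (WC * D * WCᴴ)).PosSemidef :=
    (hD.posSemidef.mul_mul_conjTranspose_same WC).smul hvol.le
  have hS : (αE • (Qᴴ * Q)).PosSemidef := (posSemidef_conjTranspose_mul_self Q).smul hα.le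
  simp only [← conjTranspose_eq_transpose_of_trivial] at hK hWRNR hWCNR
  subst hK
  refine ⟨hC.add hS, fun x => ?_⟩
  rw [hC.add_mulVec_eq_zero_iff hS, smul_mulVec, smul_mulVec, smul_eq_zero_iff_right hvol.ne',
    smul_eq_zero_iff_right hα.ne', hD.mul_mul_conjTranspose_mulVec_eq_zero_iff,
    conjTranspose_mul_self_mulVec_eq_zero]
  exact mulVec_eq_zero_and_one_sub_mulVec_eq_zero_iff NR NC WRᴴ WCᴴ hWRNR hWCNR x

/-- with the diagonal stabilization, the VEM stiffness matrix
K_h^E = |E| W_C D W_Cᵀ + α^E (I − P_P)ᵀ(I − P_P) is symmetric positive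
semidefinite and its kernel is exactly the column space of N_R (the nodal
rigid body motions), given the duality relations making
P_P = N_R W_Rᵀ + N_C W_Cᵀ a projection onto the column space of [N_R, N_C]. -/
theorem stmt16 {n : ℕ}
    (NR NC WR WC : Matrix (Fin (3 * n)) (Fin 6) ℝ)
    (D : Matrix (Fin 6) (Fin 6) ℝ) (hD : D.PosDef)
    (volE αE : ℝ) (hvol : 0 < volE) (hα : 0 < αE)
    (hWRNR : WRᵀ * NR = 1) (hWRNC : WRᵀ * NC = 0)
    (hWCNR : WCᵀ * NR = 0) (hWCNC : WCᵀ * NC = 1)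
    (K : Matrix (Fin (3 * n)) (Fin (3 * n)) ℝ)
    (hK : K = volE • (WC * D * WCᵀ) +
      αE • ((1 - (NR * WRᵀ + NC * WCᵀ))ᵀ * (1 - (NR * WRᵀ + NC * WCᵀ)))) :
    K.PosSemidef ∧ ∀ x : Fin (3 * n) → ℝ,
      (K.mulVec x = 0 ↔ ∃ y : Fin 6 → ℝ, x = NR.mulVec y) :=
  stmt16_general NR NC WR WC D hD volE αE hvol hα hWRNR hWCNR K hK
end
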